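/- arXiv:2411.11333 — 2 statements merged into one kernel-verified Lean document; each statement's English description precedes it below -/
import Mathlib

section
/- Let n ≥ 1, b ∈ ℝ with b ≥ 2 - 2n, and let u : ℝⁿ → ℂ be a radial function in the weighted Sobolev space W_b^{1,2} (i.e. u ∈ L² and |x|^{b/2}∇u ∈ L²). Then there exists a constant C depending only on n such that sup_{x ∈ ℝⁿ} |x|^{(2n-2+b)/4} |u(x)| ≤ C ‖∇u‖_{L²(|x|^b dx)}^{1/2} ‖u‖_{L²}^{1/2}. -/
/-!
Write `u x = f ‖x‖` with `f t = u (t • v)` for a unit vector `v`; by reflection symmetry also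
`‖Du x‖ = G ‖x‖` with `‖f'‖ ≤ G`, and polar coordinates turn both integrals into
`ω ∫₀^∞ t^{n-1} (⋯) dt`. On the half-line, `‖f‖²` and its derivative `2⟪f, f'⟫` are integrable
near infinity, so `‖f‖² → 0` there and `‖f r‖² ≤ 2 ∫_r^∞ ‖f‖ ‖f'‖`. Multiplying by `r^α ≤ t^α`,
where `α = n - 1 + b/2 ≥ 0`, and applying Cauchy–Schwarz to `t^α = t^{(n-1+b)/2} t^{(n-1)/2}`
gives `r^α ‖f r‖² ≤ 2 (∫ t^{n-1+b} G²)^{1/2} (∫ t^{n-1} ‖f‖²)^{1/2}`; the origin follows by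
continuity.
-/

open MeasureTheory Real Set Metric

namespace MeasureTheory

theorem IntegrableOn.of_rpow_mul {h : ℝ → ℝ} {s r : ℝ} (hs : 0 ≤ s) (hr : 0 < r)
    (hint : IntegrableOn (fun t => t ^ s * h t) (Ioi r)) : IntegrableOn h (Ioi r) := by
  refine (integrableOn_congr_fun (fun t (ht : r < t) => ?_) measurableSet_Ioi).1
    (hint.bdd_mul (f := fun t => (t ^ s)⁻¹) (c := (r ^ s)⁻¹) (by fun_prop) ?_)
  · have ht0 := hr.trans ht
    rw [← mul_assoc, inv_mul_cancel₀ (by positivity), one_mul]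
  · filter_upwards [ae_restrict_mem measurableSet_Ioi] with t (ht : r < t)
    have ht0 := hr.trans ht
    rw [norm_inv, Real.norm_of_nonneg (by positivity)]
    gcongr

end MeasureTheory

theorem integral_mul_le_sqrt_mul_sqrt {α : Type*} [MeasurableSpace α] {μ : Measure α}
    {φ γ : α → ℝ} (hφ0 : 0 ≤ᵐ[μ] φ) (hγ0 : 0 ≤ᵐ[μ] γ) (hφ : MemLp φ 2 μ) (hγ : MemLp γ 2 μ) :
    ∫ x, φ x * γ x ∂μ ≤ √(∫ x, φ x ^ 2 ∂μ) * √(∫ x, γ x ^ 2 ∂μ) := by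
  have := integral_mul_le_Lp_mul_Lq_of_nonneg Real.HolderConjugate.two_two hφ0 hγ0
    (by simpa using hφ) (by simpa using hγ)
  simpa only [Real.rpow_two, Real.sqrt_eq_rpow, one_div] using this

section OneDimensional

variable {F : Type*} [NormedAddCommGroup F] [InnerProductSpace ℝ F]

theorem sq_norm_le_two_mul_integral_Ioi {f : ℝ → F} {g : ℝ → ℝ} {r : ℝ}
    (hf : Differentiable ℝ f) (hfg : ∀ t, ‖deriv f t‖ ≤ g t)
    (hf_int : IntegrableOn (fun t => ‖f t‖ ^ 2) (Ioi r))
    (hfg_int : IntegrableOn (fun t => ‖f t‖ * g t) (Ioi r)) :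
    ‖f r‖ ^ 2 ≤ 2 * ∫ t in Ioi r, ‖f t‖ * g t := by
  set ψ : ℝ → ℝ := fun t => ‖f t‖ ^ 2
  have hψ : ∀ t, HasDerivAt ψ (2 * inner ℝ (f t) (deriv f t)) t := fun t =>
    (hf t).hasDerivAt.norm_sq
  have hψ'_le : ∀ t, ‖deriv ψ t‖ ≤ 2 * (‖f t‖ * g t) := fun t => by
    rw [(hψ t).deriv, norm_mul, Real.norm_two]
    gcongr
    exact (norm_inner_le_norm _ _).trans (by gcongr; exact hfg t)
  have hψ_deriv : ∀ t, HasDerivAt ψ (deriv ψ t) t := fun t => (hψ t).differentiableAt.hasDerivAt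
  have hψ'_int : IntegrableOn (deriv ψ) (Ioi r) :=
    (hfg_int.const_mul 2).mono' (aestronglyMeasurable_deriv ψ _) (ae_of_all _ hψ'_le)
  have hFTC : ∫ t in Ioi r, deriv ψ t = 0 - ψ r :=
    integral_Ioi_of_hasDerivAt_of_tendsto' (fun t _ => hψ_deriv t) hψ'_int
      (tendsto_zero_of_hasDerivAt_of_integrableOn_Ioi (fun t _ => hψ_deriv t) hψ'_int hf_int)
  calc ‖f r‖ ^ 2 = -∫ t in Ioi r, deriv ψ t := by rw [hFTC]; ring
    _ ≤ ∫ t in Ioi r, ‖deriv ψ t‖ :=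
      (neg_le_abs _).trans (norm_integral_le_integral_norm (deriv ψ))
    _ ≤ ∫ t in Ioi r, 2 * (‖f t‖ * g t) :=
      integral_mono hψ'_int.norm (hfg_int.const_mul 2) hψ'_le
    _ = 2 * ∫ t in Ioi r, ‖f t‖ * g t := integral_const_mul _ _

theorem rpow_mul_sq_norm_le_of_pos {f : ℝ → F} {g : ℝ → ℝ} {a b r : ℝ} (ha : 0 ≤ a)
    (hab : 0 ≤ 2 * a + b) (hr : 0 < r) (hf : Differentiable ℝ f) (hfg : ∀ t, ‖deriv f t‖ ≤ g t)
    (hg : AEStronglyMeasurable g (volume.restrict (Ioi 0)))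
    (hg_int : IntegrableOn (fun t => t ^ a * (t ^ b * g t ^ 2)) (Ioi 0))
    (hf_int : IntegrableOn (fun t => t ^ a * ‖f t‖ ^ 2) (Ioi 0)) :
    r ^ (a + b / 2) * ‖f r‖ ^ 2 ≤
      2 * √(∫ t in Ioi 0, t ^ a * (t ^ b * g t ^ 2)) * √(∫ t in Ioi 0, t ^ a * ‖f t‖ ^ 2) := by
  have hα : 0 ≤ a + b / 2 := by linarith
  have hg0 : ∀ t, 0 ≤ g t := fun t => (norm_nonneg _).trans (hfg t)
  have hfc : Continuous f := hf.continuous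
  set P : ℝ → ℝ := fun t => t ^ ((a + b) / 2) * g t
  set Q : ℝ → ℝ := fun t => t ^ (a / 2) * ‖f t‖
  have hP_sq : ∀ t ∈ Ioi (0 : ℝ), P t ^ 2 = t ^ a * (t ^ b * g t ^ 2) := fun t (ht : 0 < t) => by
    simp only [P, mul_pow, ← Real.rpow_natCast, ← Real.rpow_mul ht.le, ← mul_assoc,
      ← Real.rpow_add ht]
    norm_num
  have hQ_sq : ∀ t ∈ Ioi (0 : ℝ), Q t ^ 2 = t ^ a * ‖f t‖ ^ 2 := fun t (ht : 0 < t) => by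
    simp only [Q, mul_pow, ← Real.rpow_natCast, ← Real.rpow_mul ht.le]
    norm_num
  have hPQ : ∀ t ∈ Ioi (0 : ℝ), P t * Q t = t ^ (a + b / 2) * (‖f t‖ * g t) :=
    fun t (ht : 0 < t) => by
      simp only [P, Q]
      rw [show a + b / 2 = (a + b) / 2 + a / 2 by ring, Real.rpow_add ht]
      ring
  have hP : MemLp P 2 (volume.restrict (Ioi 0)) :=
    (memLp_two_iff_integrable_sq (by fun_prop)).2
      ((integrableOn_congr_fun hP_sq measurableSet_Ioi).2 hg_int)
  have hQ : MemLp Q 2 (volume.restrict (Ioi 0)) :=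
    (memLp_two_iff_integrable_sq (by fun_prop)).2
      ((integrableOn_congr_fun hQ_sq measurableSet_Ioi).2 hf_int)
  have hPQ_int : IntegrableOn (fun t => t ^ (a + b / 2) * (‖f t‖ * g t)) (Ioi 0) :=
    (integrableOn_congr_fun hPQ measurableSet_Ioi).1 (hP.integrable_mul hQ)
  have hPQ_int_r := hPQ_int.mono_set (Ioi_subset_Ioi hr.le)
  have hweight : ∀ t ∈ Ioi r, r ^ (a + b / 2) * (‖f t‖ * g t) ≤ t ^ (a + b / 2) * (‖f t‖ * g t) :=
    fun t (ht : r < t) => by gcongr; exact mul_nonneg (norm_nonneg _) (hg0 t)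
  calc r ^ (a + b / 2) * ‖f r‖ ^ 2
      ≤ r ^ (a + b / 2) * (2 * ∫ t in Ioi r, ‖f t‖ * g t) := by
        gcongr
        exact sq_norm_le_two_mul_integral_Ioi hf hfg
          ((hf_int.mono_set (Ioi_subset_Ioi hr.le)).of_rpow_mul ha hr)
          (hPQ_int_r.of_rpow_mul hα hr)
    _ = 2 * ∫ t in Ioi r, r ^ (a + b / 2) * (‖f t‖ * g t) := by
        rw [integral_const_mul]; ring
    _ ≤ 2 * ∫ t in Ioi r, t ^ (a + b / 2) * (‖f t‖ * g t) := by
        gcongr 2 * ?_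
        exact setIntegral_mono_on (hPQ_int_r.of_rpow_mul hα hr |>.const_mul _) hPQ_int_r
          measurableSet_Ioi hweight
    _ ≤ 2 * ∫ t in Ioi 0, t ^ (a + b / 2) * (‖f t‖ * g t) := by
        gcongr
        filter_upwards [ae_restrict_mem measurableSet_Ioi] with t (ht : 0 < t)
        exact mul_nonneg (by positivity) (mul_nonneg (norm_nonneg _) (hg0 t))
    _ = 2 * ∫ t in Ioi 0, P t * Q t := by rw [setIntegral_congr_fun measurableSet_Ioi hPQ]
    _ ≤ 2 * (√(∫ t in Ioi 0, P t ^ 2) * √(∫ t in Ioi 0, Q t ^ 2)) := by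
        gcongr
        refine integral_mul_le_sqrt_mul_sqrt ?_ ?_ hP hQ <;>
          filter_upwards [ae_restrict_mem measurableSet_Ioi] with t (ht : 0 < t)
        · exact mul_nonneg (by positivity) (hg0 t)
        · positivity
    _ = _ := by
        rw [setIntegral_congr_fun measurableSet_Ioi hP_sq,
          setIntegral_congr_fun measurableSet_Ioi hQ_sq, mul_assoc]

theorem rpow_mul_sq_norm_le {f : ℝ → F} {g : ℝ → ℝ} {a b r : ℝ} (ha : 0 ≤ a)
    (hab : 0 ≤ 2 * a + b) (hr : 0 ≤ r) (hf : Differentiable ℝ f) (hfg : ∀ t, ‖deriv f t‖ ≤ g t)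
    (hg : AEStronglyMeasurable g (volume.restrict (Ioi 0)))
    (hg_int : IntegrableOn (fun t => t ^ a * (t ^ b * g t ^ 2)) (Ioi 0))
    (hf_int : IntegrableOn (fun t => t ^ a * ‖f t‖ ^ 2) (Ioi 0)) :
    r ^ (a + b / 2) * ‖f r‖ ^ 2 ≤
      2 * √(∫ t in Ioi 0, t ^ a * (t ^ b * g t ^ 2)) * √(∫ t in Ioi 0, t ^ a * ‖f t‖ ^ 2) := by
  set K := 2 * √(∫ t in Ioi 0, t ^ a * (t ^ b * g t ^ 2)) * √(∫ t in Ioi 0, t ^ a * ‖f t‖ ^ 2)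
  have hclosed : IsClosed {r : ℝ | r ^ (a + b / 2) * ‖f r‖ ^ 2 ≤ K} :=
    isClosed_le ((Real.continuous_rpow_const (by linarith)).mul (hf.continuous.norm.pow 2))
      continuous_const
  exact hclosed.closure_subset_iff.2
    (fun r hr => rpow_mul_sq_norm_le_of_pos ha hab hr hf hfg hg hg_int hf_int)
    (closure_Ioi (0 : ℝ) ▸ hr)

end OneDimensional

section Radial

variable {E : Type*} [NormedAddCommGroup E] [InnerProductSpace ℝ E]
  {F : Type*} [NormedAddCommGroup F] [NormedSpace ℝ F]

theorem norm_fderiv_eq_of_norm_eq {u : E → F} (hrad : ∀ x y : E, ‖x‖ = ‖y‖ → u x = u y)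
    {x y : E} (hxy : ‖x‖ = ‖y‖) : ‖fderiv ℝ u x‖ = ‖fderiv ℝ u y‖ := by
  -- the reflection exchanging `x` and `y` leaves `u` invariant
  set R : E ≃ₗᵢ[ℝ] E := Submodule.reflection (ℝ ∙ (x - y))ᗮ
  have huR : u ∘ R.toContinuousLinearEquiv = u := funext fun z => hrad _ _ (R.norm_map z)
  calc ‖fderiv ℝ u x‖ = ‖fderiv ℝ (u ∘ R.toContinuousLinearEquiv) x‖ := by rw [huR]
    _ = ‖(fderiv ℝ u y).comp (R.toContinuousLinearEquiv : E →L[ℝ] E)‖ := by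
      rw [ContinuousLinearEquiv.comp_right_fderiv]
      congr 3
      exact Submodule.reflection_sub hxy
    _ = ‖fderiv ℝ u y‖ := (fderiv ℝ u y).opNorm_comp_linearIsometryEquiv R

end Radial

section Strauss

open Module

variable {E : Type*} [NormedAddCommGroup E] [InnerProductSpace ℝ E] [FiniteDimensional ℝ E]
  [Nontrivial E] [MeasurableSpace E] [BorelSpace E] (μ : Measure E) [μ.IsAddHaarMeasure]
  {F : Type*} [NormedAddCommGroup F] [InnerProductSpace ℝ F] [CompleteSpace F]

theorem rpow_mul_sq_norm_le_of_radial {u : E → F} {b : ℝ} (hb : 2 - 2 * (finrank ℝ E : ℝ) ≤ b)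
    (hu : Differentiable ℝ u) (hrad : ∀ x y : E, ‖x‖ = ‖y‖ → u x = u y)
    (hu_int : Integrable (fun x => ‖u x‖ ^ 2) μ)
    (hDu_int : Integrable (fun x => ‖x‖ ^ b * ‖fderiv ℝ u x‖ ^ 2) μ) (x : E) :
    ‖x‖ ^ ((2 * (finrank ℝ E : ℝ) - 2 + b) / 2) * ‖u x‖ ^ 2 ≤
      2 / (finrank ℝ E * μ.real (ball 0 1)) * √(∫ y, ‖y‖ ^ b * ‖fderiv ℝ u y‖ ^ 2 ∂μ) *
        √(∫ y, ‖u y‖ ^ 2 ∂μ) := by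
  obtain ⟨v, hv⟩ := exists_norm_eq E zero_le_one
  set f : ℝ → F := fun t => u (t • v)
  set G : ℝ → ℝ := fun t => ‖fderiv ℝ u (t • v)‖
  have hnorm : ∀ y : E, ‖y‖ = ‖‖y‖ • v‖ := fun y => by simp [norm_smul, hv]
  have hu_eq : ∀ y, u y = f ‖y‖ := fun y => hrad _ _ (hnorm y)
  have hDu_eq : ∀ y, ‖fderiv ℝ u y‖ = G ‖y‖ := fun y => norm_fderiv_eq_of_norm_eq hrad (hnorm y)
  have hf : Differentiable ℝ f := hu.comp (differentiable_id.smul_const v)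
  have hfG : ∀ t, ‖deriv f t‖ ≤ G t := fun t => by
    have hderiv : HasDerivAt f (fderiv ℝ u (t • v) v) t := by
      simpa [Function.comp_def] using
        (hu _).hasFDerivAt.comp_hasDerivAt t ((hasDerivAt_id t).smul_const v)
    rw [hderiv.deriv]
    simpa [hv] using (fderiv ℝ u (t • v)).le_opNorm v
  have hG : Measurable G := (measurable_fderiv ℝ u).norm.comp (by fun_prop)
  simp only [hu_eq, hDu_eq] at hu_int hDu_int ⊢
  have hA := integral_fun_norm_addHaar μ (fun t => t ^ b * G t ^ 2)
  have hB := integral_fun_norm_addHaar μ (fun t => ‖f t‖ ^ 2)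
  have hA_int := (integrable_fun_norm_addHaar μ (f := fun t => t ^ b * G t ^ 2)).1 hDu_int
  have hB_int := (integrable_fun_norm_addHaar μ (f := fun t => ‖f t‖ ^ 2)).1 hu_int
  simp only [smul_eq_mul, nsmul_eq_mul] at hA hB hA_int hB_int
  have hd : 1 ≤ finrank ℝ E := finrank_pos
  have key := rpow_mul_sq_norm_le (a := ((finrank ℝ E - 1 : ℕ) : ℝ)) (b := b) (r := ‖x‖)
    (Nat.cast_nonneg _) (by push_cast [hd]; linarith) (norm_nonneg x) hf hfG
    hG.aestronglyMeasurable (by simpa only [Real.rpow_natCast] using hA_int)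
    (by simpa only [Real.rpow_natCast] using hB_int)
  simp only [Real.rpow_natCast] at key
  have hball : 0 < μ.real (ball 0 1) :=
    ENNReal.toReal_pos (measure_ball_pos μ 0 one_pos).ne' measure_ball_lt_top.ne
  have hω : 0 < (finrank ℝ E : ℝ) * μ.real (ball 0 1) := by positivity
  have hexp : (2 * (finrank ℝ E : ℝ) - 2 + b) / 2 = ((finrank ℝ E - 1 : ℕ) : ℝ) + b / 2 := by
    push_cast [hd]; ring
  rw [hA, hB, ← mul_assoc, ← mul_assoc, Real.sqrt_mul hω.le, Real.sqrt_mul hω.le, hexp]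
  convert key using 1
  field_simp
  rw [Real.sq_sqrt hω.le]

end Strauss

/-- Weighted radial Strauss-type inequality in `W_b^{1,2}`: for `n ≥ 1`, `b ≥ 2 - 2n`,
there is `C = C(n)` such that every radial `u ∈ W_b^{1,2}` satisfies
`sup_x |x|^{(2n-2+b)/4}|u(x)| ≤ C ‖∇u‖_{L²(|x|^b dx)}^{1/2} ‖u‖_{L²}^{1/2}`. -/
theorem weighted_radial_strauss (n : ℕ) (hn : 1 ≤ n) :
    ∃ C > 0, ∀ (b : ℝ), 2 - 2 * (n : ℝ) ≤ b →
      ∀ u : EuclideanSpace ℝ (Fin n) → ℂ,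
        Differentiable ℝ u →
        Integrable (fun x => ‖u x‖ ^ 2) →
        Integrable (fun x => ‖x‖ ^ b * ‖fderiv ℝ u x‖ ^ 2) →
        (∀ x y : EuclideanSpace ℝ (Fin n), ‖x‖ = ‖y‖ → u x = u y) →
        ∀ x : EuclideanSpace ℝ (Fin n),
          ‖x‖ ^ ((2 * (n : ℝ) - 2 + b) / 4) * ‖u x‖ ≤
            C * (∫ y : EuclideanSpace ℝ (Fin n), ‖y‖ ^ b * ‖fderiv ℝ u y‖ ^ 2) ^ ((1:ℝ)/4) *
              (∫ y : EuclideanSpace ℝ (Fin n), ‖u y‖ ^ 2) ^ ((1:ℝ)/4) := by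
  have : NeZero n := ⟨by omega⟩
  have hball : 0 < volume.real (ball (0 : EuclideanSpace ℝ (Fin n)) 1) :=
    ENNReal.toReal_pos (measure_ball_pos _ 0 one_pos).ne' measure_ball_lt_top.ne
  have hc : 0 < 2 / (n * volume.real (ball (0 : EuclideanSpace ℝ (Fin n)) 1)) := by positivity
  refine ⟨_, Real.sqrt_pos.2 hc, fun b hb u hu hu_int hDu_int hrad x => ?_⟩
  have key := rpow_mul_sq_norm_le_of_radial volume (by simpa using hb) hu hrad hu_int hDu_int x
  rw [finrank_euclideanSpace_fin] at key
  have hA : 0 ≤ ∫ y : EuclideanSpace ℝ (Fin n), ‖y‖ ^ b * ‖fderiv ℝ u y‖ ^ 2 :=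
    integral_nonneg fun y => by positivity
  have hB : 0 ≤ ∫ y : EuclideanSpace ℝ (Fin n), ‖u y‖ ^ 2 := integral_nonneg fun y => by positivity
  have hquarter : ∀ {y : ℝ}, 0 ≤ y → √(√y) = y ^ ((1 : ℝ) / 4) := fun hy => by
    rw [Real.sqrt_eq_rpow, Real.sqrt_eq_rpow, ← Real.rpow_mul hy]; norm_num
  have hsq : (‖x‖ ^ ((2 * (n : ℝ) - 2 + b) / 4) * ‖u x‖) ^ 2 =
      ‖x‖ ^ ((2 * (n : ℝ) - 2 + b) / 2) * ‖u x‖ ^ 2 := by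
    rw [mul_pow, ← Real.rpow_natCast, ← Real.rpow_mul (norm_nonneg x)]; ring_nf
  calc ‖x‖ ^ ((2 * (n : ℝ) - 2 + b) / 4) * ‖u x‖
      = √(‖x‖ ^ ((2 * (n : ℝ) - 2 + b) / 2) * ‖u x‖ ^ 2) := by
        rw [← hsq, Real.sqrt_sq (by positivity)]
    _ ≤ √(2 / (n * volume.real (ball (0 : EuclideanSpace ℝ (Fin n)) 1)) *
          √(∫ y, ‖y‖ ^ b * ‖fderiv ℝ u y‖ ^ 2) * √(∫ y, ‖u y‖ ^ 2)) := Real.sqrt_le_sqrt key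
    _ = _ := by
        rw [Real.sqrt_mul (mul_nonneg hc.le (Real.sqrt_nonneg _)), Real.sqrt_mul hc.le,
          hquarter hA, hquarter hB]
end

section
/- Let β ∈ (0,1), T* > 0, C₀ > 0, and let f : [0,T*) → [0,∞) be differentiable with f(0) ≤ C₀ and satisfying f(τ) ≤ C₀ (T*-τ)^{2β/(β+1)} - (T*-τ) f'(τ) for all τ ∈ [0,T*). Then there is a constant C₁ (depending on C₀, β, T*) such that f(τ) ≤ C₁ (T*-τ)^{2β/(β+1)} for all τ sufficiently close to T*. -/
open Real Set

/-!
With `p = 2β/(β+1) < 1` the hypothesis reads `(f(τ)/(T-τ))' ≤ C₀ (T-τ)^(p-2)`, so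
`f(τ)/(T-τ) - C₀/(1-p) (T-τ)^(p-1)` is nonincreasing. Comparing with `τ = 0` gives
`f(τ) ≤ f(0)/T (T-τ) + C₀/(1-p) (T-τ)^p`, and the linear term is absorbed using
`T-τ ≤ T^(1-p) (T-τ)^p`.
-/

theorem hasDerivAt_div_sub_sub_mul_rpow {f : ℝ → ℝ} {f' T K p s : ℝ} (hf : HasDerivAt f f' s)
    (hs : s < T) :
    HasDerivAt (fun x => f x / (T - x) - K * (T - x) ^ p)
      ((f' * (T - s) + f s) / (T - s) ^ 2 + K * p * (T - s) ^ (p - 1)) s := by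
  have hTs : T - s ≠ 0 := (sub_pos.2 hs).ne'
  have hsub : HasDerivAt (fun x => T - x) (-1) s := by
    simpa using (hasDerivAt_id s).const_sub T
  refine ((hf.div hsub hTs).sub ((hsub.rpow_const (Or.inl hTs)).const_mul K)).congr_deriv ?_
  ring

theorem antitoneOn_div_sub_sub_mul_rpow {f f' : ℝ → ℝ} {a T C p : ℝ} (hp : p ≠ 1)
    (hderiv : ∀ τ ∈ Ico a T, HasDerivAt f (f' τ) τ)
    (hineq : ∀ τ ∈ Ico a T, f τ ≤ C * (T - τ) ^ p - (T - τ) * f' τ) :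
    AntitoneOn (fun τ => f τ / (T - τ) - C / (1 - p) * (T - τ) ^ (p - 1)) (Ico a T) := by
  have hder (s) (hs : s ∈ Ico a T) := hasDerivAt_div_sub_sub_mul_rpow (K := C / (1 - p))
    (p := p - 1) (hderiv s hs) hs.2
  refine antitoneOn_of_hasDerivWithinAt_nonpos (convex_Ico a T)
    (fun s hs => (hder s hs).continuousAt.continuousWithinAt)
    (fun s hs => (hder s (interior_subset hs)).hasDerivWithinAt) fun s hs => ?_
  have hs' := interior_subset hs
  have hTs : 0 < T - s := sub_pos.2 hs'.2
  have hsq : (T - s) ^ p / (T - s) ^ 2 = (T - s) ^ (p - 1 - 1) := by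
    rw [← rpow_sub_natCast hTs.ne']; norm_num [sub_sub]
  have hquot : (f' s * (T - s) + f s) / (T - s) ^ 2 ≤ C * (T - s) ^ (p - 1 - 1) := by
    rw [← hsq, ← mul_div_assoc]
    gcongr
    linarith [hineq s hs']
  have hcoef : C / (1 - p) * (p - 1) = -C := by
    field_simp [sub_ne_zero.2 hp.symm]; ring
  rw [hcoef]
  linarith

theorem le_rpow_mul_rpow {x y p : ℝ} (hx : 0 ≤ x) (hxy : x ≤ y) (hp : p ≤ 1) :
    x ≤ y ^ (1 - p) * x ^ p := by
  calc x = x ^ (1 - p) * x ^ p := by rw [← rpow_add' hx (by simp), sub_add_cancel, rpow_one]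
    _ ≤ y ^ (1 - p) * x ^ p := by gcongr

theorem le_mul_rpow_of_le_rpow_sub_mul_deriv {f f' : ℝ → ℝ} {a T C M p : ℝ} (hp : p < 1)
    (hC : 0 ≤ C) (hM : 0 ≤ M) (haT : a < T) (hfa : f a ≤ M)
    (hderiv : ∀ τ ∈ Ico a T, HasDerivAt f (f' τ) τ)
    (hineq : ∀ τ ∈ Ico a T, f τ ≤ C * (T - τ) ^ p - (T - τ) * f' τ) :
    ∀ τ ∈ Ico a T, f τ ≤ (M * (T - a) ^ (-p) + C / (1 - p)) * (T - τ) ^ p := by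
  intro τ hτ
  have hTa : 0 < T - a := sub_pos.2 haT
  have hTτ : 0 < T - τ := sub_pos.2 hτ.2
  have hmono := antitoneOn_div_sub_sub_mul_rpow hp.ne hderiv hineq ⟨le_rfl, haT⟩ hτ hτ.1
  have hquot : f τ / (T - τ) ≤ M / (T - a) + C / (1 - p) * (T - τ) ^ (p - 1) := by
    have : f a / (T - a) ≤ M / (T - a) := by gcongr
    have : 0 ≤ C / (1 - p) * (T - a) ^ (p - 1) := by positivity
    simp only at hmono
    linarith
  have hlin : T - τ ≤ (T - a) ^ (1 - p) * (T - τ) ^ p :=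
    le_rpow_mul_rpow hTτ.le (by linarith [hτ.1]) hp.le
  calc f τ ≤ M / (T - a) * (T - τ) + C / (1 - p) * (T - τ) ^ p := by
        rw [div_le_iff₀ hTτ] at hquot
        rwa [add_mul, mul_assoc, ← rpow_add_one hTτ.ne', sub_add_cancel] at hquot
    _ ≤ M / (T - a) * ((T - a) ^ (1 - p) * (T - τ) ^ p) + C / (1 - p) * (T - τ) ^ p := by
        gcongr
    _ = (M * (T - a) ^ (-p) + C / (1 - p)) * (T - τ) ^ p := by
        rw [rpow_sub hTa, rpow_one, rpow_neg hTa.le]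
        field_simp

theorem ode_comparison_blowup_rate_general (β T C₀ : ℝ) (hβ0 : 0 < β) (hβ1 : β < 1)
    (hT : 0 < T) (hC₀ : 0 < C₀) (f f' : ℝ → ℝ)
    (hderiv : ∀ τ ∈ Ico (0:ℝ) T, HasDerivAt f (f' τ) τ)
    (hf0 : f 0 ≤ C₀)
    (hmain : ∀ τ ∈ Ico (0:ℝ) T,
      f τ ≤ C₀ * (T - τ) ^ (2 * β / (β + 1)) - (T - τ) * f' τ) :
    ∃ C₁ > 0, ∃ t₀ ∈ Ico (0:ℝ) T, ∀ τ ∈ Ico t₀ T,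
      f τ ≤ C₁ * (T - τ) ^ (2 * β / (β + 1)) := by
  have hp : 2 * β / (β + 1) < 1 := by rw [div_lt_one (by linarith)]; linarith
  refine ⟨C₀ * T ^ (-(2 * β / (β + 1))) + C₀ / (1 - 2 * β / (β + 1)), by positivity,
    0, ⟨le_rfl, hT⟩, fun τ hτ => ?_⟩
  simpa only [sub_zero] using
    le_mul_rpow_of_le_rpow_sub_mul_deriv hp hC₀.le hC₀.le hT hf0 hderiv hmain τ hτ

/-- ODE comparison lemma: if `f ≥ 0` on `[0,T*)`, `f(0) ≤ C₀`, and
`f(τ) ≤ C₀ (T*-τ)^{2β/(β+1)} - (T*-τ) f'(τ)` on `[0,T*)` with `β ∈ (0,1)`, then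
`f(τ) ≤ C₁ (T*-τ)^{2β/(β+1)}` for `τ` close enough to `T*`. -/
theorem ode_comparison_blowup_rate (β T C₀ : ℝ) (hβ0 : 0 < β) (hβ1 : β < 1)
    (hT : 0 < T) (hC₀ : 0 < C₀) (f f' : ℝ → ℝ)
    (hderiv : ∀ τ ∈ Ico (0:ℝ) T, HasDerivAt f (f' τ) τ)
    (hnonneg : ∀ τ ∈ Ico (0:ℝ) T, 0 ≤ f τ)
    (hf0 : f 0 ≤ C₀)
    (hmain : ∀ τ ∈ Ico (0:ℝ) T,
      f τ ≤ C₀ * (T - τ) ^ (2 * β / (β + 1)) - (T - τ) * f' τ) :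
    ∃ C₁ > 0, ∃ t₀ ∈ Ico (0:ℝ) T, ∀ τ ∈ Ico t₀ T,
      f τ ≤ C₁ * (T - τ) ^ (2 * β / (β + 1)) :=
  ode_comparison_blowup_rate_general β T C₀ hβ0 hβ1 hT hC₀ f f' hderiv hf0 hmain
end
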